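/- arXiv:2501.02537 — 3 statements merged into one kernel-verified Lean document; each statement's English description precedes it below -/
import Mathlib

section
/- Let (X, 𝒜, ν) be a probability space and T : X → X a measurable map preserving ν. Let A ∈ 𝒜, and let D̃ > 0, K ≥ 1 and β ∈ (0,1) be real constants and M₁ a positive integer such that |ν(T^{−n}A ∩ A) − ν(A)²| ≤ D̃ K ν(A)² βⁿ for every integer n > M₁. Then for every positive integer M, Σ_{m=1}^M Σ_{n=1}^M ( ν(T^{−m}A ∩ T^{−n}A) − ν(A)² ) ≤ 2 M (M₁ + 1) ν(A) + 2 D̃ K M ν(A)² β^{M₁+1} / (1 − β). -/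
/-!
Invariance of `ν` gives `ν (T⁻ᵐ A ∩ T⁻ⁿ A) = ν (T^{-|m - n|} A ∩ A)`, so each correlation is
bounded by a nonnegative function of `|m - n|`: by `ν A` near the diagonal and by the decay rate
beyond `M₁`. For fixed `m` every distance occurs at most twice among `n ∈ [1, M]`, so each row sum
is at most twice a sum over distances `k < M`, i.e. `M₁ + 1` near-diagonal terms plus a geometric
tail.
-/

open MeasureTheory Finset

theorem Finset.sum_comp_le_sum_of_injOn {ι κ R : Type*} [AddCommMonoid R] [PartialOrder R]
    [IsOrderedAddMonoid R] {s : Finset ι} {t : Finset κ} {e : ι → κ} {f : κ → R}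
    (he : Set.InjOn e s) (hest : Set.MapsTo e s t) (hf : ∀ k ∈ t, 0 ≤ f k) :
    ∑ i ∈ s, f (e i) ≤ ∑ k ∈ t, f k := by
  classical
  rw [← sum_image he]
  exact sum_le_sum_of_subset_of_nonneg (image_subset_iff.2 hest) fun k hk _ ↦ hf k hk

theorem sum_Icc_dist_le_two_mul_sum_range {h : ℕ → ℝ} (hh : ∀ k, 0 ≤ h k) {M m : ℕ}
    (hm : m ∈ Icc 1 M) :
    ∑ n ∈ Icc 1 M, h (Nat.dist m n) ≤ 2 * ∑ k ∈ range M, h k := by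
  rw [mem_Icc] at hm
  rw [← sum_filter_add_sum_filter_not _ (· < m), two_mul]
  gcongr <;>
    refine sum_comp_le_sum_of_injOn (fun x hx y hy hxy ↦ ?_) (fun x hx ↦ ?_) fun k _ ↦ hh k
  all_goals
    simp only [coe_filter, mem_Icc, Set.mem_ofPred_eq, coe_range, Set.mem_Iio, Nat.dist] at *
    omega

theorem sum_range_ite_le_add_geom {a c β : ℝ} (ha : 0 ≤ a) (hc : 0 ≤ c) (hβ0 : 0 ≤ β)
    (hβ1 : β < 1) (M₁ M : ℕ) :
    ∑ k ∈ range M, (if k ≤ M₁ then a else c * β ^ k)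
      ≤ (M₁ + 1) * a + c * (β ^ (M₁ + 1) / (1 - β)) := by
  set g : ℕ → ℝ := fun k ↦ if k ≤ M₁ then a else c * β ^ k
  have hg : ∀ k, 0 ≤ g k := fun k ↦ by dsimp only [g]; split_ifs <;> positivity
  calc ∑ k ∈ range M, g k ≤ ∑ k ∈ range (M₁ + 1 + M), g k :=
        sum_le_sum_of_subset_of_nonneg (range_subset_range.2 (by omega)) fun k _ _ ↦ hg k
    _ = ∑ k ∈ range (M₁ + 1), g k + ∑ k ∈ Ico (M₁ + 1) (M₁ + 1 + M), g k :=
        (sum_range_add_sum_Ico _ (by omega)).symm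
    _ = ∑ k ∈ range (M₁ + 1), a + c * ∑ k ∈ Ico (M₁ + 1) (M₁ + 1 + M), β ^ k := by
        rw [mul_sum]
        congr 1 <;> refine sum_congr rfl fun k hk ↦ ?_
        · simp_all [g]
        · simp only [mem_Ico] at hk
          simp [g, show ¬ k ≤ M₁ by omega]
    _ ≤ (M₁ + 1) * a + c * (β ^ (M₁ + 1) / (1 - β)) := by
        rw [sum_const, card_range, nsmul_eq_mul]
        push_cast
        gcongr
        exact geom_sum_Ico_le_of_lt_one hβ0 hβ1

theorem MeasureTheory.MeasurePreserving.measure_preimage_iterate_inter_preimage_iterate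
    {X : Type*} [MeasurableSpace X] {μ : Measure X} {T : X → X}
    (hT : MeasurePreserving T μ μ) {A : Set X} (hA : MeasurableSet A) (m n : ℕ) :
    μ (T^[m] ⁻¹' A ∩ T^[n] ⁻¹' A) = μ (T^[Nat.dist m n] ⁻¹' A ∩ A) := by
  wlog hmn : m ≤ n generalizing m n
  · rw [Set.inter_comm, this n m (by omega), Nat.dist_comm]
  obtain ⟨k, rfl⟩ := Nat.exists_eq_add_of_le' hmn
  rw [Nat.dist_eq_sub_of_le hmn, Nat.add_sub_cancel, Function.iterate_add,
    Set.preimage_comp, ← Set.preimage_inter,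
    (hT.iterate m).measure_preimage ((hA.inter ((hT.iterate k).measurable hA)).nullMeasurableSet),
    Set.inter_comm]

theorem stmt_1_general {X : Type*} [MeasurableSpace X] (ν : Measure X) [IsProbabilityMeasure ν]
    (T : X → X) (hT : MeasurePreserving T ν ν)
    (A : Set X) (hA : MeasurableSet A)
    (D K β : ℝ) (hD : 0 < D) (hK : 1 ≤ K) (hβ0 : 0 < β) (hβ1 : β < 1)
    (M₁ : ℕ)
    (hdecay : ∀ n : ℕ, M₁ < n →
      |(ν ((T^[n]) ⁻¹' A ∩ A)).toReal - (ν A).toReal ^ 2|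
        ≤ D * K * (ν A).toReal ^ 2 * β ^ n)
    (M : ℕ) :
    ∑ m ∈ Finset.Icc 1 M, ∑ n ∈ Finset.Icc 1 M,
        ((ν ((T^[m]) ⁻¹' A ∩ (T^[n]) ⁻¹' A)).toReal - (ν A).toReal ^ 2)
      ≤ 2 * (M : ℝ) * ((M₁ : ℝ) + 1) * (ν A).toReal
        + 2 * D * K * (M : ℝ) * (ν A).toReal ^ 2 * β ^ (M₁ + 1) / (1 - β) := by
  set a := (ν A).toReal
  set c := D * K * a ^ 2
  have ha : 0 ≤ a := ENNReal.toReal_nonneg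
  have hc : 0 ≤ c := mul_nonneg (mul_nonneg hD.le (by linarith)) (sq_nonneg a)
  set h : ℕ → ℝ := fun k ↦ if k ≤ M₁ then a else c * β ^ k
  have hh : ∀ k, 0 ≤ h k := fun k ↦ by dsimp only [h]; split_ifs <;> positivity
  have hcorr : ∀ m n, (ν (T^[m] ⁻¹' A ∩ T^[n] ⁻¹' A)).toReal - a ^ 2 ≤ h (Nat.dist m n) := by
    intro m n
    rw [hT.measure_preimage_iterate_inter_preimage_iterate hA]
    dsimp only [h]
    split_ifs with hk
    · have : (ν (T^[Nat.dist m n] ⁻¹' A ∩ A)).toReal ≤ a :=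
        ENNReal.toReal_mono (measure_ne_top ν A) (measure_mono Set.inter_subset_right)
      linarith [sq_nonneg a]
    · exact (abs_le.mp (hdecay _ (by omega))).2
  calc _ ≤ ∑ m ∈ Icc 1 M, ∑ n ∈ Icc 1 M, h (Nat.dist m n) :=
        sum_le_sum fun m _ ↦ sum_le_sum fun n _ ↦ hcorr m n
    _ ≤ ∑ m ∈ Icc 1 M, 2 * ((M₁ + 1) * a + c * (β ^ (M₁ + 1) / (1 - β))) :=
        sum_le_sum fun m hm ↦ (sum_Icc_dist_le_two_mul_sum_range hh hm).trans <| by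
          gcongr; exact sum_range_ite_le_add_geom ha hc hβ0.le hβ1 M₁ M
    _ = _ := by
        rw [sum_const, Nat.card_Icc, nsmul_eq_mul, Nat.add_sub_cancel]
        ring

/-- Correlation-sum bound under exponential decay of correlations for the set `A` beyond
time `M₁` (Lemma 8.1). -/
theorem stmt_1 {X : Type*} [MeasurableSpace X] (ν : Measure X) [IsProbabilityMeasure ν]
    (T : X → X) (hT : MeasurePreserving T ν ν)
    (A : Set X) (hA : MeasurableSet A)
    (D K β : ℝ) (hD : 0 < D) (hK : 1 ≤ K) (hβ0 : 0 < β) (hβ1 : β < 1)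
    (M₁ : ℕ) (hM₁ : 0 < M₁)
    (hdecay : ∀ n : ℕ, M₁ < n →
      |(ν ((T^[n]) ⁻¹' A ∩ A)).toReal - (ν A).toReal ^ 2|
        ≤ D * K * (ν A).toReal ^ 2 * β ^ n)
    (M : ℕ) (hM : 0 < M) :
    ∑ m ∈ Finset.Icc 1 M, ∑ n ∈ Finset.Icc 1 M,
        ((ν ((T^[m]) ⁻¹' A ∩ (T^[n]) ⁻¹' A)).toReal - (ν A).toReal ^ 2)
      ≤ 2 * (M : ℝ) * ((M₁ : ℝ) + 1) * (ν A).toReal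
        + 2 * D * K * (M : ℝ) * (ν A).toReal ^ 2 * β ^ (M₁ + 1) / (1 - β) :=
  stmt_1_general ν T hT A hA D K β hD hK hβ0 hβ1 M₁ hdecay M
end

section
/- Let (X, 𝒜, ν) be a probability space and T : X → X a measurable map preserving ν. Let A ∈ 𝒜, and let D̃ > 0, K ≥ 1 and β ∈ (0,1) be real constants and M₁ a positive integer such that |ν(T^{−n}A ∩ A) − ν(A)²| ≤ D̃ K ν(A)² βⁿ for every integer n > M₁. Then for every positive integer M, with S_M(x) = Σ_{j=1}^M 1_A(T^j x), one has ∫_X ( S_M(x)/M − ν(A) )² dν(x) ≤ 2 (M₁ + 1) ν(A) / M + 2 D̃ K ν(A)² β^{M₁+1} / ((1 − β) M). -/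
/-!
Write `S_M = ∑_{j=1}^M 1_A ∘ T^j`. Each summand has mean `ν(A)`, so the left-hand side is the
variance of `S_M / M`, i.e. `M⁻²` times the double sum of the covariances of `1_A ∘ T^i` and
`1_A ∘ T^j`. By invariance of `ν` this covariance is `ν(T^{-|i-j|}A ∩ A) - ν(A)²`, which is at most
`ν(A)` for every lag and at most `D K ν(A)² βⁿ` for lags `n > M₁`. Each lag `n < M` occurs in at
most `2M` pairs `(i, j)`, and summing the two bounds over the lags (the second one geometrically)
gives the claim.
-/

open MeasureTheory ProbabilityTheory Finset

section DistanceSums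

variable {b : ℕ → ℝ}

theorem sum_range_dist_le_two_mul (hb : ∀ n, 0 ≤ b n) {M i : ℕ} (hi : i < M) :
    ∑ j ∈ range M, b (Nat.dist i j) ≤ 2 * ∑ n ∈ range M, b n := by
  have hsub : ∀ {k}, k ≤ M → ∑ n ∈ range k, b n ≤ ∑ n ∈ range M, b n := fun hk =>
    sum_le_sum_of_subset_of_nonneg (range_subset_range.2 hk) fun n _ _ => hb n
  -- `j ↦ dist i j` is injective on each side of `i`
  have below : ∑ j ∈ range (i + 1), b (Nat.dist i j) ≤ ∑ n ∈ range M, b n :=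
    calc ∑ j ∈ range (i + 1), b (Nat.dist i j) = ∑ j ∈ range (i + 1), b (i + 1 - 1 - j) :=
          sum_congr rfl fun j hj => by
            rw [Nat.dist_comm, Nat.dist_eq_sub_of_le (by grind)]; rfl
      _ = ∑ n ∈ range (i + 1), b n := sum_range_reflect b (i + 1)
      _ ≤ _ := hsub hi
  have above : ∑ j ∈ Ico (i + 1) M, b (Nat.dist i j) ≤ ∑ n ∈ range M, b n :=
    calc ∑ j ∈ Ico (i + 1) M, b (Nat.dist i j) ≤ ∑ j ∈ Ico i M, b (Nat.dist i j) :=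
          sum_le_sum_of_subset_of_nonneg (Ico_subset_Ico_left i.le_succ) fun _ _ _ => hb _
      _ = ∑ k ∈ range (M - i), b k := by
          rw [sum_Ico_eq_sum_range]
          refine sum_congr rfl fun k _ => ?_
          rw [Nat.dist_eq_sub_of_le (Nat.le_add_right i k), Nat.add_sub_cancel_left]
      _ ≤ _ := hsub (Nat.sub_le M i)
  rw [← sum_range_add_sum_Ico _ hi]
  linarith

theorem sum_range_sum_range_dist_le (hb : ∀ n, 0 ≤ b n) (M : ℕ) :
    ∑ i ∈ range M, ∑ j ∈ range M, b (Nat.dist i j) ≤ 2 * M * ∑ n ∈ range M, b n :=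
  calc ∑ i ∈ range M, ∑ j ∈ range M, b (Nat.dist i j)
      ≤ ∑ _i ∈ range M, 2 * ∑ n ∈ range M, b n :=
        sum_le_sum fun _ hi => sum_range_dist_le_two_mul hb (mem_range.1 hi)
    _ = 2 * M * ∑ n ∈ range M, b n := by rw [sum_const, card_range, nsmul_eq_mul]; ring

theorem sum_range_le_of_le_const_of_le_geom {a C β : ℝ} {M₁ : ℕ} (hb : ∀ n, 0 ≤ b n)
    (hhead : ∀ n ≤ M₁, b n ≤ a) (htail : ∀ n, M₁ < n → b n ≤ C * β ^ n)
    (hC : 0 ≤ C) (hβ0 : 0 ≤ β) (hβ1 : β < 1) (M : ℕ) :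
    ∑ n ∈ range M, b n ≤ (M₁ + 1) * a + C * β ^ (M₁ + 1) / (1 - β) := by
  set N := max M (M₁ + 1)
  calc ∑ n ∈ range M, b n ≤ ∑ n ∈ range N, b n :=
        sum_le_sum_of_subset_of_nonneg (range_subset_range.2 (le_max_left _ _))
          fun n _ _ => hb n
    _ = ∑ n ∈ range (M₁ + 1), b n + ∑ n ∈ Ico (M₁ + 1) N, b n :=
        (sum_range_add_sum_Ico _ (le_max_right _ _)).symm
    _ ≤ ∑ _n ∈ range (M₁ + 1), a + ∑ n ∈ Ico (M₁ + 1) N, C * β ^ n := by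
        gcongr with n hn n hn
        · exact hhead n (Nat.lt_succ_iff.1 (mem_range.1 hn))
        · exact htail n (mem_Ico.1 hn).1
    _ ≤ (M₁ + 1) * a + C * β ^ (M₁ + 1) / (1 - β) := by
        rw [sum_const, card_range, nsmul_eq_mul, ← mul_sum, mul_div_assoc]
        push_cast
        gcongr
        exact geom_sum_Ico_le_of_lt_one hβ0 hβ1

end DistanceSums

namespace ProbabilityTheory

variable {Ω ι : Type*} [MeasurableSpace Ω] {μ : Measure Ω} [IsProbabilityMeasure μ]

theorem integral_sq_sum_div_card_sub_eq_sum_covariance {s : Finset ι} (hs : s.Nonempty)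
    {X : ι → Ω → ℝ} {m : ℝ} (hX : ∀ i ∈ s, MemLp (X i) 2 μ) (hm : ∀ i ∈ s, μ[X i] = m) :
    ∫ ω, ((∑ i ∈ s, X i ω) / #s - m) ^ 2 ∂μ
      = (∑ i ∈ s, ∑ j ∈ s, cov[X i, X j; μ]) / #s ^ 2 := by
  have hcard : (#s : ℝ) ≠ 0 := by exact_mod_cast hs.card_pos.ne'
  have hsum : MemLp (fun ω => ∑ i ∈ s, X i ω) 2 μ := memLp_finsetSum s hX
  have hmean : μ[fun ω => (∑ i ∈ s, X i ω) / #s] = m := by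
    rw [integral_div, integral_finsetSum _ fun i hi => (hX i hi).integrable one_le_two,
      sum_congr rfl hm, sum_const, nsmul_eq_mul]
    field_simp
  rw [← hmean, ← variance_eq_integral (hsum.aemeasurable.div_const _)]
  simp_rw [div_eq_mul_inv _ (#s : ℝ)]
  rw [variance_mul_const, variance_fun_sum' hX, inv_pow, div_eq_mul_inv]

end ProbabilityTheory

namespace MeasureTheory.MeasurePreserving

variable {X : Type*} [MeasurableSpace X] {μ : Measure X} {T : X → X} {A : Set X}

theorem measure_preimage_iterate_inter (hT : MeasurePreserving T μ μ) (hA : MeasurableSet A)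
    (i j : ℕ) : μ (T^[i] ⁻¹' A ∩ T^[j] ⁻¹' A) = μ (T^[Nat.dist i j] ⁻¹' A ∩ A) := by
  wlog hij : i ≤ j generalizing i j
  · rw [Set.inter_comm, Nat.dist_comm, this j i (le_of_not_ge hij)]
  obtain ⟨k, rfl⟩ := Nat.exists_eq_add_of_le hij
  rw [Nat.dist_eq_sub_of_le hij, Nat.add_sub_cancel_left, add_comm, Function.iterate_add,
    Set.preimage_comp, ← Set.preimage_inter, Set.inter_comm,
    (hT.iterate i).measure_preimage (((hT.iterate k).measurable hA).inter hA).nullMeasurableSet]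

theorem integral_indicator_one_comp_iterate (hT : MeasurePreserving T μ μ)
    (hA : MeasurableSet A) (n : ℕ) : ∫ x, A.indicator (1 : X → ℝ) (T^[n] x) ∂μ = μ.real A := by
  simp_rw [← Set.indicator_comp_right, Pi.one_comp]
  rw [integral_indicator_one ((hT.iterate n).measurable hA), measureReal_def,
    (hT.iterate n).measure_preimage hA.nullMeasurableSet, measureReal_def]

variable [IsProbabilityMeasure μ]

theorem covariance_indicator_one_comp_iterate (hT : MeasurePreserving T μ μ)
    (hA : MeasurableSet A) (i j : ℕ) :
    cov[fun x => A.indicator 1 (T^[i] x), fun x => A.indicator 1 (T^[j] x); μ]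
      = μ.real (T^[Nat.dist i j] ⁻¹' A ∩ A) - μ.real A ^ 2 := by
  have hpre : ∀ n, (fun x => A.indicator (1 : X → ℝ) (T^[n] x)) = (T^[n] ⁻¹' A).indicator 1 :=
    fun n => funext fun x => (Set.indicator_comp_right (T^[n])).symm
  have hmeas : ∀ n, MeasurableSet (T^[n] ⁻¹' A) := fun n => (hT.iterate n).measurable hA
  have hL2 : ∀ n, MemLp ((T^[n] ⁻¹' A).indicator (1 : X → ℝ)) 2 μ :=
    fun n => (memLp_const 1).indicator (hmeas n)
  rw [covariance_eq_sub (hpre i ▸ hL2 i) (hpre j ▸ hL2 j),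
    hT.integral_indicator_one_comp_iterate hA, hT.integral_indicator_one_comp_iterate hA,
    hpre, hpre, ← Set.inter_indicator_one, integral_indicator_one ((hmeas i).inter (hmeas j)), sq]
  simp only [measureReal_def, hT.measure_preimage_iterate_inter hA]

end MeasureTheory.MeasurePreserving

theorem stmt_2_general {X : Type*} [MeasurableSpace X] (ν : Measure X) [IsProbabilityMeasure ν]
    (T : X → X) (hT : MeasurePreserving T ν ν)
    (A : Set X) (hA : MeasurableSet A)
    (D K β : ℝ) (hD : 0 < D) (hK : 1 ≤ K) (hβ0 : 0 < β) (hβ1 : β < 1)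
    (M₁ : ℕ)
    (hdecay : ∀ n : ℕ, M₁ < n →
      |(ν ((T^[n]) ⁻¹' A ∩ A)).toReal - (ν A).toReal ^ 2|
        ≤ D * K * (ν A).toReal ^ 2 * β ^ n)
    (M : ℕ) (hM : 0 < M) :
    ∫ x, ((∑ j ∈ Finset.Icc 1 M, A.indicator (fun _ => (1 : ℝ)) (T^[j] x)) / (M : ℝ)
        - (ν A).toReal) ^ 2 ∂ν
      ≤ 2 * ((M₁ : ℝ) + 1) * (ν A).toReal / (M : ℝ)
        + 2 * D * K * (ν A).toReal ^ 2 * β ^ (M₁ + 1) / ((1 - β) * (M : ℝ)) := by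
  set a := ν.real A
  set C := D * K * a ^ 2
  set b : ℕ → ℝ := fun n => max (ν.real (T^[n] ⁻¹' A ∩ A) - a ^ 2) 0
  have hb : ∀ n, 0 ≤ b n := fun n => le_max_right _ _
  have hhead : ∀ n, b n ≤ a := fun n =>
    max_le (by linarith [measureReal_mono (μ := ν) (Set.inter_subset_right (s := T^[n] ⁻¹' A)),
      sq_nonneg a]) measureReal_nonneg
  have htail : ∀ n, M₁ < n → b n ≤ C * β ^ n := fun n hn =>
    max_le ((le_abs_self _).trans (hdecay n hn)) (by positivity)
  have hvar := integral_sq_sum_div_card_sub_eq_sum_covariance (nonempty_Icc.2 hM)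
    (fun j _ => ((memLp_const (1 : ℝ)).indicator hA).comp_measurePreserving (hT.iterate j))
    (fun j _ => hT.integral_indicator_one_comp_iterate hA j)
  rw [Nat.card_Icc, add_tsub_cancel_right] at hvar
  have hshift : ∑ i ∈ Icc 1 M, ∑ j ∈ Icc 1 M, b (Nat.dist i j)
      = ∑ i ∈ range M, ∑ j ∈ range M, b (Nat.dist i j) := by
    simp only [← Ico_add_one_right_eq_Icc, sum_Ico_eq_sum_range, add_tsub_cancel_right,
      Nat.dist_add_add_left]
  calc _ = (∑ i ∈ Icc 1 M, ∑ j ∈ Icc 1 M, cov[fun x => A.indicator 1 (T^[i] x),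
          fun x => A.indicator 1 (T^[j] x); ν]) / (M : ℝ) ^ 2 := hvar
    _ ≤ (2 * M * ((M₁ + 1) * a + C * β ^ (M₁ + 1) / (1 - β))) / (M : ℝ) ^ 2 := by
        gcongr
        calc _ ≤ ∑ i ∈ Icc 1 M, ∑ j ∈ Icc 1 M, b (Nat.dist i j) := by
              gcongr with i _ j _
              rw [hT.covariance_indicator_one_comp_iterate hA]
              exact le_max_left _ _
          _ ≤ 2 * M * ∑ n ∈ range M, b n := hshift ▸ sum_range_sum_range_dist_le hb M
          _ ≤ _ := by
              gcongr
              exact sum_range_le_of_le_const_of_le_geom hb (fun n _ => hhead n) htail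
                (by positivity) hβ0.le hβ1 M
    _ = _ := by simp only [a, C, measureReal_def]; field_simp

/-- L² deviation of the visit frequency `S_M/M` from `ν(A)` under exponential decay of
correlations for the set `A` beyond time `M₁` (Lemmas 8.1 + 8.2). -/
theorem stmt_2 {X : Type*} [MeasurableSpace X] (ν : Measure X) [IsProbabilityMeasure ν]
    (T : X → X) (hT : MeasurePreserving T ν ν)
    (A : Set X) (hA : MeasurableSet A)
    (D K β : ℝ) (hD : 0 < D) (hK : 1 ≤ K) (hβ0 : 0 < β) (hβ1 : β < 1)
    (M₁ : ℕ) (hM₁ : 0 < M₁)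
    (hdecay : ∀ n : ℕ, M₁ < n →
      |(ν ((T^[n]) ⁻¹' A ∩ A)).toReal - (ν A).toReal ^ 2|
        ≤ D * K * (ν A).toReal ^ 2 * β ^ n)
    (M : ℕ) (hM : 0 < M) :
    ∫ x, ((∑ j ∈ Finset.Icc 1 M, A.indicator (fun _ => (1 : ℝ)) (T^[j] x)) / (M : ℝ)
        - (ν A).toReal) ^ 2 ∂ν
      ≤ 2 * ((M₁ : ℝ) + 1) * (ν A).toReal / (M : ℝ)
        + 2 * D * K * (ν A).toReal ^ 2 * β ^ (M₁ + 1) / ((1 - β) * (M : ℝ)) :=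
  stmt_2_general ν T hT A hA D K β hD hK hβ0 hβ1 M₁ hdecay M hM
end

section
/- Fix an integer k₀ ≥ 1, a k₀ × k₀ matrix A with entries in {0,1}, θ ∈ (0,1), and a constant T₀ > 0. Then there exists a constant A₀ > 0, depending only on θ and T₀, with the following property. Let f, τ : Σ_A⁺ → ℝ satisfy |f(v) − f(v')| ≤ T₀ d_θ(v,v') and |τ(v) − τ(v')| ≤ T₀ d_θ(v,v') for all v, v' ∈ Σ_A⁺. Let b ∈ ℝ with |b| ≥ 1, let m ≥ 1 be an integer, let B > 0, let H : Σ_A⁺ → (0,∞), and let h : Σ_A⁺ → ℂ satisfy |h(v) − h(v')| ≤ B H(v') d_θ(v,v') whenever v₀ = v'₀. Then, for all u, u' ∈ Σ_A⁺ with u₀ = u'₀, |(L_{f − i b τ}^m h)(u) − (L_{f − i b τ}^m h)(u')| ≤ A₀ [ B θ^m (L_f^m H)(u') + |b| (L_f^m |h|)(u') ] · d_θ(u, u'). -/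
/-!
Write `L = L_{f - i b τ}`, `d = d_θ(v, v')` and `C = T₀ θ / (1 - θ)`. Prepending a symbol multiplies
`d_θ` by `θ`, so, splitting `e^{g} h - e^{g'} h' = e^{g} (h - h') + (e^{g} - e^{g'}) h'`, one
application of `L` turns a bound `‖h v - h v'‖ ≤ H v' · d e^{C d}` on 1-cylinders into one of the
same shape for `L h`, with weight `θ L_f H + K θ L_f |h|` where `K = (1 + |b|) T₀`; the distortion
`e^{T₀ θ d}` of the weights is absorbed into `e^{C d}` because `(T₀ + C) θ = C`. Since
`|L h| ≤ L_f |h|` and `(K + D) θ = D` for `D = (1 + |b|) C`, after `m` steps the weight stays below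
`θ^m L_f^m H + D L_f^m |h|`; finally `d e^{C d} ≤ e^C d` and `1 + |b| ≤ 2 |b|` give
`A₀ = e^C (1 + 2C)`.
-/

def SigmaPlus {k₀ : ℕ} (A : Fin k₀ → Fin k₀ → Bool) : Set (ℕ → Fin k₀) :=
  {x | ∀ j, A (x j) (x (j + 1)) = true}

open Classical in
noncomputable def dtheta {k₀ : ℕ} (θ : ℝ) (x y : ℕ → Fin k₀) : ℝ :=
  if h : x = y then 0
  else θ ^ Nat.find (Function.ne_iff.mp h)

def consSeq {k₀ : ℕ} (i : Fin k₀) (x : ℕ → Fin k₀) : ℕ → Fin k₀ :=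
  fun n => Nat.casesOn n i fun m => x m

/-- `(L_g h)(u) = ∑_{σ v = u} e^{g(v)} h(v)`, the preimages of `u` being its admissible
one-symbol extensions `consSeq i u`. -/
noncomputable def RuelleC {k₀ : ℕ} (A : Fin k₀ → Fin k₀ → Bool)
    (g : (ℕ → Fin k₀) → ℂ) (h : (ℕ → Fin k₀) → ℂ) : (ℕ → Fin k₀) → ℂ :=
  fun u => ∑ i : Fin k₀,
    if A i (u 0) = true then Complex.exp (g (consSeq i u)) * h (consSeq i u) else 0

noncomputable def RuelleR {k₀ : ℕ} (A : Fin k₀ → Fin k₀ → Bool)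
    (g : (ℕ → Fin k₀) → ℝ) (h : (ℕ → Fin k₀) → ℝ) : (ℕ → Fin k₀) → ℝ :=
  fun u => ∑ i : Fin k₀,
    if A i (u 0) = true then Real.exp (g (consSeq i u)) * h (consSeq i u) else 0

lemma Complex.norm_exp_sub_exp_le (z w : ℂ) :
    ‖Complex.exp z - Complex.exp w‖ ≤ Real.exp (max z.re w.re) * ‖z - w‖ := by
  simpa using (convex_halfSpace_re_le (max z.re w.re)).norm_image_sub_le_of_norm_deriv_le
    (fun x _ => Complex.differentiable_exp x)
    (fun x hx => by rw [Complex.deriv_exp, Complex.norm_exp]; exact Real.exp_le_exp.2 hx)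
    (le_max_right z.re w.re) (le_max_left z.re w.re)

lemma Complex.norm_exp_mul_sub_exp_mul_le {a a' x x' : ℂ} {s P Q : ℝ} (hre : |a.re - a'.re| ≤ s)
    (hx : ‖x - x'‖ ≤ P) (ha : ‖a - a'‖ ≤ Q) :
    ‖Complex.exp a * x - Complex.exp a' * x'‖
      ≤ Real.exp a'.re * (Real.exp s * P + Real.exp s * Q * ‖x'‖) := by
  have hmax : max a.re a'.re ≤ a'.re + s :=
    max_le (by linarith [le_abs_self (a.re - a'.re)]) (by linarith [(abs_nonneg _).trans hre])
  have hexp : Real.exp (max a.re a'.re) ≤ Real.exp a'.re * Real.exp s := by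
    rw [← Real.exp_add]; exact Real.exp_le_exp.2 hmax
  calc ‖Complex.exp a * x - Complex.exp a' * x'‖
      = ‖Complex.exp a * (x - x') + (Complex.exp a - Complex.exp a') * x'‖ := by
        congr 1; ring
    _ ≤ ‖Complex.exp a‖ * ‖x - x'‖ + ‖Complex.exp a - Complex.exp a'‖ * ‖x'‖ := by
        rw [← norm_mul, ← norm_mul]; exact norm_add_le _ _
    _ ≤ (Real.exp a'.re * Real.exp s) * P + ((Real.exp a'.re * Real.exp s) * Q) * ‖x'‖ := by
        gcongr
        · rw [Complex.norm_exp]; exact (Real.exp_le_exp.2 (le_max_left _ _)).trans hexp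
        · exact (Complex.norm_exp_sub_exp_le a a').trans (by gcongr)
    _ = Real.exp a'.re * (Real.exp s * P + Real.exp s * Q * ‖x'‖) := by ring

lemma Complex.norm_ofReal_sub_I_mul_sub_le (x x' b y y' : ℝ) :
    ‖((x : ℂ) - Complex.I * b * y) - ((x' : ℂ) - Complex.I * b * y')‖
      ≤ |x - x'| + |b| * |y - y'| := by
  have : ((x : ℂ) - Complex.I * b * y) - ((x' : ℂ) - Complex.I * b * y')
      = ((x - x' : ℝ) : ℂ) - Complex.I * b * ((y - y' : ℝ) : ℂ) := by
    push_cast; ring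
  rw [this]
  refine (norm_sub_le _ _).trans_eq ?_
  simp only [norm_mul, Complex.norm_I, one_mul, Complex.norm_real, Real.norm_eq_abs]

section Shift

variable {k₀ : ℕ}

lemma consSeq_injective (i : Fin k₀) : Function.Injective (consSeq i) :=
  fun _ _ h => funext fun n => congrFun h (n + 1)

lemma consSeq_mem_sigmaPlus {A : Fin k₀ → Fin k₀ → Bool} {u : ℕ → Fin k₀}
    (hu : u ∈ SigmaPlus A) {i : Fin k₀} (hi : A i (u 0) = true) :
    consSeq i u ∈ SigmaPlus A
  | 0 => hi
  | j + 1 => hu j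

lemma dtheta_nonneg {θ : ℝ} (hθ : 0 ≤ θ) (x y : ℕ → Fin k₀) : 0 ≤ dtheta θ x y := by
  unfold dtheta
  split
  · exact le_rfl
  · exact pow_nonneg hθ _

lemma dtheta_le_one {θ : ℝ} (hθ0 : 0 ≤ θ) (hθ1 : θ ≤ 1) (x y : ℕ → Fin k₀) :
    dtheta θ x y ≤ 1 := by
  unfold dtheta
  split
  · exact zero_le_one
  · exact pow_le_one₀ hθ0 hθ1

lemma dtheta_consSeq (θ : ℝ) (i : Fin k₀) (x y : ℕ → Fin k₀) :
    dtheta θ (consSeq i x) (consSeq i y) = θ * dtheta θ x y := by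
  by_cases hxy : x = y
  · simp [dtheta, hxy]
  have hne : consSeq i x ≠ consSeq i y := (consSeq_injective i).ne hxy
  rw [dtheta, dtheta, dif_neg hne, dif_neg hxy,
    Nat.find_comp_succ _ (Function.ne_iff.mp hxy) (by simp [consSeq]), pow_succ, mul_comm]
  rfl

end Shift

section Transfer

variable {k₀ : ℕ} {A : Fin k₀ → Fin k₀ → Bool}

lemma RuelleR_linear (f : (ℕ → Fin k₀) → ℝ) (a c : ℝ) (p q : (ℕ → Fin k₀) → ℝ)
    (u : ℕ → Fin k₀) :
    RuelleR A f (fun v => a * p v + c * q v) u = a * RuelleR A f p u + c * RuelleR A f q u := by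
  simp only [RuelleR, Finset.mul_sum, ← Finset.sum_add_distrib]
  refine Finset.sum_congr rfl fun i _ => ?_
  split_ifs <;> ring

lemma iterate_RuelleR_const_mul (f : (ℕ → Fin k₀) → ℝ) (c : ℝ) (p : (ℕ → Fin k₀) → ℝ)
    (m : ℕ) : (RuelleR A f)^[m] (fun v => c * p v) = fun u => c * (RuelleR A f)^[m] p u := by
  induction m with
  | zero => rfl
  | succ m ih =>
    rw [Function.iterate_succ_apply', ih, Function.iterate_succ_apply']
    funext u
    simpa using RuelleR_linear f c 0 ((RuelleR A f)^[m] p) 0 u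

lemma RuelleR_mono_on (f : (ℕ → Fin k₀) → ℝ) {p q : (ℕ → Fin k₀) → ℝ}
    (hpq : ∀ v ∈ SigmaPlus A, p v ≤ q v) {u : ℕ → Fin k₀} (hu : u ∈ SigmaPlus A) :
    RuelleR A f p u ≤ RuelleR A f q u :=
  Finset.sum_le_sum fun i _ => by
    split_ifs with hi
    · exact mul_le_mul_of_nonneg_left (hpq _ (consSeq_mem_sigmaPlus hu hi)) (Real.exp_nonneg _)
    · exact le_rfl

lemma iterate_RuelleR_nonneg_on (f : (ℕ → Fin k₀) → ℝ) {p : (ℕ → Fin k₀) → ℝ}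
    (hp : ∀ v ∈ SigmaPlus A, 0 ≤ p v) (m : ℕ) :
    ∀ u ∈ SigmaPlus A, 0 ≤ (RuelleR A f)^[m] p u := by
  induction m with
  | zero => exact hp
  | succ m ih =>
    intro u hu
    rw [Function.iterate_succ_apply']
    refine Finset.sum_nonneg fun i _ => ?_
    split_ifs with hi
    · exact mul_nonneg (Real.exp_nonneg _) (ih _ (consSeq_mem_sigmaPlus hu hi))
    · exact le_rfl

lemma norm_RuelleC_le {f : (ℕ → Fin k₀) → ℝ} {g : (ℕ → Fin k₀) → ℂ}
    (hre : ∀ v, (g v).re = f v) (h : (ℕ → Fin k₀) → ℂ) (u : ℕ → Fin k₀) :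
    ‖RuelleC A g h u‖ ≤ RuelleR A f (fun v => ‖h v‖) u :=
  (norm_sum_le _ _).trans <| Finset.sum_le_sum fun i _ => by
    split_ifs <;> simp [Complex.norm_exp, hre]

lemma norm_iterate_RuelleC_le_on {f : (ℕ → Fin k₀) → ℝ} {g : (ℕ → Fin k₀) → ℂ}
    (hre : ∀ v, (g v).re = f v) (h : (ℕ → Fin k₀) → ℂ) (m : ℕ) :
    ∀ u ∈ SigmaPlus A, ‖(RuelleC A g)^[m] h u‖ ≤ (RuelleR A f)^[m] (fun v => ‖h v‖) u := by
  induction m with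
  | zero => exact fun u _ => le_rfl
  | succ m ih =>
    intro u hu
    rw [Function.iterate_succ_apply', Function.iterate_succ_apply']
    exact (norm_RuelleC_le hre _ u).trans (RuelleR_mono_on f ih hu)

end Transfer

-- The factor `e^{C d}` absorbs the distortion `e^{f_m(v) - f_m(v')}` of the weights of `L^m`.
def LipOnCylinders {k₀ : ℕ} (A : Fin k₀ → Fin k₀ → Bool) (θ C : ℝ)
    (h : (ℕ → Fin k₀) → ℂ) (H : (ℕ → Fin k₀) → ℝ) : Prop :=
  ∀ v ∈ SigmaPlus A, ∀ v' ∈ SigmaPlus A, v 0 = v' 0 →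
    ‖h v - h v'‖ ≤ H v' * (dtheta θ v v' * Real.exp (C * dtheta θ v v'))

namespace LipOnCylinders

variable {k₀ : ℕ} {A : Fin k₀ → Fin k₀ → Bool} {θ C : ℝ} {h : (ℕ → Fin k₀) → ℂ}
  {H : (ℕ → Fin k₀) → ℝ}

lemma mono (hθ : 0 ≤ θ) {H' : (ℕ → Fin k₀) → ℝ} (hH : ∀ v ∈ SigmaPlus A, H v ≤ H' v)
    (hh : LipOnCylinders A θ C h H) : LipOnCylinders A θ C h H' := by
  intro v hv v' hv' h0
  have hd := dtheta_nonneg (θ := θ) hθ v v'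
  exact (hh v hv v' hv' h0).trans (mul_le_mul_of_nonneg_right (hH v' hv') (by positivity))

lemma norm_exp_mul_consSeq_sub_le {T₀ K : ℝ} {f : (ℕ → Fin k₀) → ℝ} {g : (ℕ → Fin k₀) → ℂ}
    (hθ : 0 ≤ θ) (hC : 0 ≤ C) (hCθ : (T₀ + C) * θ ≤ C) (hre : ∀ v, (g v).re = f v)
    (hf : ∀ v ∈ SigmaPlus A, ∀ v' ∈ SigmaPlus A, |f v - f v'| ≤ T₀ * dtheta θ v v')
    (hg : ∀ v ∈ SigmaPlus A, ∀ v' ∈ SigmaPlus A, ‖g v - g v'‖ ≤ K * dtheta θ v v')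
    (hh : LipOnCylinders A θ C h H) {v v' : ℕ → Fin k₀} (hv : v ∈ SigmaPlus A)
    (hv' : v' ∈ SigmaPlus A) {i : Fin k₀} (hi : A i (v 0) = true) (hi' : A i (v' 0) = true) :
    ‖Complex.exp (g (consSeq i v)) * h (consSeq i v)
        - Complex.exp (g (consSeq i v')) * h (consSeq i v')‖
      ≤ Real.exp (f (consSeq i v')) * ((θ * H (consSeq i v') + K * θ * ‖h (consSeq i v')‖)
        * (dtheta θ v v' * Real.exp (C * dtheta θ v v'))) := by
  set d := dtheta θ v v'
  have hd : 0 ≤ d := dtheta_nonneg hθ v v'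
  have hw := consSeq_mem_sigmaPlus hv hi
  have hw' := consSeq_mem_sigmaPlus hv' hi'
  have hdw : dtheta θ (consSeq i v) (consSeq i v') = θ * d := dtheta_consSeq θ i v v'
  have hhw := hh _ hw _ hw' rfl
  have hgw := hg _ hw _ hw'
  rw [hdw] at hhw hgw
  have hP : 0 ≤ H (consSeq i v') * (θ * d) :=
    nonneg_of_mul_nonneg_left (by linarith [(norm_nonneg _).trans hhw]) (Real.exp_pos _)
  have hQ : 0 ≤ K * (θ * d) := (norm_nonneg _).trans hgw
  have hexp : Real.exp (T₀ * (θ * d)) ≤ Real.exp (C * d) :=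
    Real.exp_le_exp.2 (by nlinarith [mul_nonneg (mul_nonneg hC hθ) hd])
  have hexp' : Real.exp (T₀ * (θ * d)) * Real.exp (C * (θ * d)) ≤ Real.exp (C * d) := by
    rw [← Real.exp_add]; exact Real.exp_le_exp.2 (by nlinarith)
  refine (Complex.norm_exp_mul_sub_exp_mul_le (s := T₀ * (θ * d))
    (by rw [hre, hre, ← hdw]; exact hf _ hw _ hw') hhw hgw).trans ?_
  rw [hre]
  refine mul_le_mul_of_nonneg_left ?_ (Real.exp_nonneg _)
  calc Real.exp (T₀ * (θ * d)) * (H (consSeq i v') * (θ * d * Real.exp (C * (θ * d))))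
        + Real.exp (T₀ * (θ * d)) * (K * (θ * d)) * ‖h (consSeq i v')‖
      = H (consSeq i v') * (θ * d) * (Real.exp (T₀ * (θ * d)) * Real.exp (C * (θ * d)))
        + K * (θ * d) * ‖h (consSeq i v')‖ * Real.exp (T₀ * (θ * d)) := by ring
    _ ≤ H (consSeq i v') * (θ * d) * Real.exp (C * d)
        + K * (θ * d) * ‖h (consSeq i v')‖ * Real.exp (C * d) := by gcongr
    _ = _ := by ring

lemma ruelleC {T₀ K : ℝ} {f : (ℕ → Fin k₀) → ℝ} {g : (ℕ → Fin k₀) → ℂ}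
    (hθ : 0 ≤ θ) (hC : 0 ≤ C) (hCθ : (T₀ + C) * θ ≤ C) (hre : ∀ v, (g v).re = f v)
    (hf : ∀ v ∈ SigmaPlus A, ∀ v' ∈ SigmaPlus A, |f v - f v'| ≤ T₀ * dtheta θ v v')
    (hg : ∀ v ∈ SigmaPlus A, ∀ v' ∈ SigmaPlus A, ‖g v - g v'‖ ≤ K * dtheta θ v v')
    (hh : LipOnCylinders A θ C h H) :
    LipOnCylinders A θ C (RuelleC A g h)
      (fun u => θ * RuelleR A f H u + K * θ * RuelleR A f (fun v => ‖h v‖) u) := by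
  intro v hv v' hv' h0
  calc ‖RuelleC A g h v - RuelleC A g h v'‖
      = ‖∑ i, ((if A i (v' 0) = true then
            Complex.exp (g (consSeq i v)) * h (consSeq i v) else 0)
          - if A i (v' 0) = true then
            Complex.exp (g (consSeq i v')) * h (consSeq i v') else 0)‖ := by
        rw [Finset.sum_sub_distrib, RuelleC, RuelleC, h0]
    _ ≤ ∑ i, if A i (v' 0) = true then Real.exp (f (consSeq i v'))
          * ((θ * H (consSeq i v') + K * θ * ‖h (consSeq i v')‖)
            * (dtheta θ v v' * Real.exp (C * dtheta θ v v')))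
          else 0 := by
        refine (norm_sum_le _ _).trans (Finset.sum_le_sum fun i _ => ?_)
        split_ifs with hi
        · exact norm_exp_mul_consSeq_sub_le hθ hC hCθ hre hf hg hh hv hv' (h0 ▸ hi) hi
        · simp
    _ = (θ * RuelleR A f H v' + K * θ * RuelleR A f (fun v => ‖h v‖) v')
          * (dtheta θ v v' * Real.exp (C * dtheta θ v v')) := by
        rw [← RuelleR_linear, RuelleR, Finset.sum_mul]
        refine Finset.sum_congr rfl fun i _ => ?_
        split_ifs <;> ring

lemma iterate_ruelleC {T₀ K D : ℝ} {f : (ℕ → Fin k₀) → ℝ} {g : (ℕ → Fin k₀) → ℂ}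
    (hθ : 0 ≤ θ) (hC : 0 ≤ C) (hCθ : (T₀ + C) * θ ≤ C) (hK : 0 ≤ K) (hD : 0 ≤ D)
    (hDθ : (K + D) * θ ≤ D) (hre : ∀ v, (g v).re = f v)
    (hf : ∀ v ∈ SigmaPlus A, ∀ v' ∈ SigmaPlus A, |f v - f v'| ≤ T₀ * dtheta θ v v')
    (hg : ∀ v ∈ SigmaPlus A, ∀ v' ∈ SigmaPlus A, ‖g v - g v'‖ ≤ K * dtheta θ v v')
    (hh : LipOnCylinders A θ C h H) (m : ℕ) :
    LipOnCylinders A θ C ((RuelleC A g)^[m] h)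
      (fun u => θ ^ m * (RuelleR A f)^[m] H u + D * (RuelleR A f)^[m] (fun v => ‖h v‖) u) := by
  induction m with
  | zero =>
    refine hh.mono hθ fun v _ => ?_
    simpa using mul_nonneg hD (norm_nonneg (h v))
  | succ m ih =>
    rw [Function.iterate_succ_apply']
    refine (ih.ruelleC hθ hC hCθ hre hf hg).mono hθ fun u hu => ?_
    have hnorm : RuelleR A f (fun v => ‖(RuelleC A g)^[m] h v‖) u
        ≤ (RuelleR A f)^[m + 1] (fun v => ‖h v‖) u := by
      rw [Function.iterate_succ_apply']
      exact RuelleR_mono_on f (norm_iterate_RuelleC_le_on hre h m) hu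
    have hY := iterate_RuelleR_nonneg_on f (fun v _ => norm_nonneg (h v)) (m + 1) u hu
    rw [Function.iterate_succ_apply'] at hnorm hY
    rw [RuelleR_linear, Function.iterate_succ_apply', Function.iterate_succ_apply', pow_succ]
    nlinarith [mul_le_mul_of_nonneg_left hnorm (mul_nonneg hK hθ),
      mul_le_mul_of_nonneg_right hDθ hY]

lemma of_le_mul_dtheta (hθ : 0 ≤ θ) (hC : 0 ≤ C) (hH : ∀ v ∈ SigmaPlus A, 0 ≤ H v)
    (hh : ∀ v ∈ SigmaPlus A, ∀ v' ∈ SigmaPlus A, v 0 = v' 0 →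
      ‖h v - h v'‖ ≤ H v' * dtheta θ v v') :
    LipOnCylinders A θ C h H := by
  intro v hv v' hv' h0
  have hd := dtheta_nonneg (θ := θ) hθ v v'
  refine (hh v hv v' hv' h0).trans (mul_le_mul_of_nonneg_left ?_ (hH v' hv'))
  exact le_mul_of_one_le_right hd (Real.one_le_exp (by positivity))

end LipOnCylinders

theorem stmt_5_general {k₀ : ℕ} (A : Fin k₀ → Fin k₀ → Bool)
    (θ : ℝ) (hθ0 : 0 < θ) (hθ1 : θ < 1) (T₀ : ℝ) (hT₀ : 0 < T₀) :
    ∃ A₀ : ℝ, 0 < A₀ ∧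
      ∀ f τ : (ℕ → Fin k₀) → ℝ,
        (∀ v ∈ SigmaPlus A, ∀ v' ∈ SigmaPlus A, |f v - f v'| ≤ T₀ * dtheta θ v v') →
        (∀ v ∈ SigmaPlus A, ∀ v' ∈ SigmaPlus A, |τ v - τ v'| ≤ T₀ * dtheta θ v v') →
        ∀ b : ℝ, 1 ≤ |b| →
        ∀ m : ℕ, 1 ≤ m →
        ∀ B : ℝ, 0 < B →
        ∀ H : (ℕ → Fin k₀) → ℝ, (∀ v ∈ SigmaPlus A, 0 < H v) →
        ∀ h : (ℕ → Fin k₀) → ℂ,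
          (∀ v ∈ SigmaPlus A, ∀ v' ∈ SigmaPlus A, v 0 = v' 0 →
            ‖h v - h v'‖ ≤ B * H v' * dtheta θ v v') →
        ∀ u ∈ SigmaPlus A, ∀ u' ∈ SigmaPlus A, u 0 = u' 0 →
          ‖((RuelleC A (fun v => (f v : ℂ) - Complex.I * (b : ℂ) * (τ v : ℂ)))^[m] h u
                - (RuelleC A (fun v => (f v : ℂ) - Complex.I * (b : ℂ) * (τ v : ℂ)))^[m] h u')‖
            ≤ A₀ * (B * θ ^ m * ((RuelleR A f)^[m] H u')
                  + |b| * ((RuelleR A f)^[m] (fun v => ‖h v‖) u'))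
              * dtheta θ u u' := by
  set C := T₀ * θ / (1 - θ)
  have hC : 0 ≤ C := div_nonneg (by positivity) (by linarith)
  have hCθ : (T₀ + C) * θ = C := by
    simp only [C]; field_simp [(by linarith : (1 - θ) ≠ 0)]; ring
  refine ⟨Real.exp C * (1 + 2 * C), by positivity, ?_⟩
  intro f τ hf hτ b hb m _ B hB H hH h hh u hu u' hu' h0
  have hg : ∀ v ∈ SigmaPlus A, ∀ v' ∈ SigmaPlus A,
      ‖((f v : ℂ) - Complex.I * b * τ v) - ((f v' : ℂ) - Complex.I * b * τ v')‖
        ≤ (1 + |b|) * T₀ * dtheta θ v v' := fun v hv v' hv' =>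
    (Complex.norm_ofReal_sub_I_mul_sub_le _ _ _ _ _).trans <| by
      nlinarith [hf v hv v' hv', mul_le_mul_of_nonneg_left (hτ v hv v' hv') (abs_nonneg b)]
  have hLY := LipOnCylinders.iterate_ruelleC (D := (1 + |b|) * C) hθ0.le hC hCθ.le
    (by positivity) (by positivity) (by linear_combination (1 + |b|) * hCθ)
    (fun v => by simp) hf hg
    (.of_le_mul_dtheta hθ0.le hC (fun v hv => (mul_pos hB (hH v hv)).le) hh) m u hu u' hu' h0
  rw [iterate_RuelleR_const_mul] at hLY
  beta_reduce at hLY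
  have hX := iterate_RuelleR_nonneg_on f (fun v hv => (hH v hv).le) m u' hu'
  have hY := iterate_RuelleR_nonneg_on f (fun v _ => norm_nonneg (h v)) m u' hu'
  have hd0 := dtheta_nonneg hθ0.le u u'
  have hd1 := dtheta_le_one hθ0.le hθ1.le u u'
  refine hLY.trans ?_
  calc _ ≤ ((1 + 2 * C) * (B * θ ^ m * (RuelleR A f)^[m] H u'
            + |b| * (RuelleR A f)^[m] (fun v => ‖h v‖) u')) * (dtheta θ u u' * Real.exp C) := by
        gcongr ?_ * (_ * ?_)
        · nlinarith [mul_nonneg hC (mul_nonneg (mul_nonneg hB.le (pow_nonneg hθ0.le m)) hX),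
            mul_nonneg (mul_nonneg (sub_nonneg.2 hb) hC) hY]
        · exact Real.exp_le_exp.2 (mul_le_of_le_one_right hC hd1)
    _ = _ := by ring

/-- Lemma 4.2 (Lasota–Yorke type inequality) in the symbolic model. -/
theorem stmt_5 {k₀ : ℕ} (hk : 1 ≤ k₀) (A : Fin k₀ → Fin k₀ → Bool)
    (θ : ℝ) (hθ0 : 0 < θ) (hθ1 : θ < 1) (T₀ : ℝ) (hT₀ : 0 < T₀) :
    ∃ A₀ : ℝ, 0 < A₀ ∧
      ∀ f τ : (ℕ → Fin k₀) → ℝ,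
        (∀ v ∈ SigmaPlus A, ∀ v' ∈ SigmaPlus A, |f v - f v'| ≤ T₀ * dtheta θ v v') →
        (∀ v ∈ SigmaPlus A, ∀ v' ∈ SigmaPlus A, |τ v - τ v'| ≤ T₀ * dtheta θ v v') →
        ∀ b : ℝ, 1 ≤ |b| →
        ∀ m : ℕ, 1 ≤ m →
        ∀ B : ℝ, 0 < B →
        ∀ H : (ℕ → Fin k₀) → ℝ, (∀ v ∈ SigmaPlus A, 0 < H v) →
        ∀ h : (ℕ → Fin k₀) → ℂ,
          (∀ v ∈ SigmaPlus A, ∀ v' ∈ SigmaPlus A, v 0 = v' 0 →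
            ‖h v - h v'‖ ≤ B * H v' * dtheta θ v v') →
        ∀ u ∈ SigmaPlus A, ∀ u' ∈ SigmaPlus A, u 0 = u' 0 →
          ‖((RuelleC A (fun v => (f v : ℂ) - Complex.I * (b : ℂ) * (τ v : ℂ)))^[m] h u
                - (RuelleC A (fun v => (f v : ℂ) - Complex.I * (b : ℂ) * (τ v : ℂ)))^[m] h u')‖
            ≤ A₀ * (B * θ ^ m * ((RuelleR A f)^[m] H u')
                  + |b| * ((RuelleR A f)^[m] (fun v => ‖h v‖) u'))
              * dtheta θ u u' :=
  stmt_5_general A θ hθ0 hθ1 T₀ hT₀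
end
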